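/- Let C be the circulant code with support p on n neurons, where 2 < p < n − 1, gcd(p, n) = 1, and n = pd + 1 for some positive integer d. Then the number of neural ring endomorphisms of the neural ring R_C is exactly 3n. -/

import Mathlib

/-- The circulant code with support `p` on `n` neurons: the codewords are the `n`
cyclic shifts of the vector with `p` consecutive ones followed by zeros. -/
def circCode (n p : ℕ) : Set (Fin n → Bool) :=
  {c | ∃ i : Fin n, ∀ j : Fin n, c j = decide ((j - i).val < p)}

/-- The coordinate function `x_j` of the neural ring of `C` (the ring of functions
`C → 𝔽₂` with pointwise operations). -/
def xvar {n : ℕ} (C : Set (Fin n → Bool)) (j : Fin n) : ↥C → ZMod 2 :=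
  fun c => if (c : Fin n → Bool) j then 1 else 0

/-- A ring endomorphism of the neural ring of `C` is a neural ring endomorphism if
it sends every `x_j` into `{x_1, …, x_n} ∪ {0, 1}`. -/
def IsNeuralEndo {n : ℕ} (C : Set (Fin n → Bool))
    (φ : (↥C → ZMod 2) →+* (↥C → ZMod 2)) : Prop :=
  ∀ j : Fin n, φ (xvar C j) = 0 ∨ φ (xvar C j) = 1 ∨
    ∃ i : Fin n, φ (xvar C j) = xvar C i

set_option linter.unusedSectionVars false
set_option maxHeartbeats 1000000

open Finset
open Fin.NatCast Fin.CommRing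

section core
variable {n : ℕ} [NeZero n]

lemma sub_val (a b : Fin n) : (a - b).val = (a.val + (n - b.val)) % n := by
  rw [Fin.sub_def]; ring_nf

lemma mod_cases (x : ℕ) (h : x < 2 * n) : x % n = if x < n then x else x - n := by
  split_ifs with hx
  · exact Nat.mod_eq_of_lt hx
  · rw [Nat.mod_eq_sub_mod (le_of_not_gt hx), Nat.mod_eq_of_lt (by omega)]

lemma natCast_val (a : ℕ) (h : a < n) : ((a : Fin n)).val = a := by
  rw [Fin.val_natCast, Nat.mod_eq_of_lt h]

lemma add_cast_sub (m v : Fin n) (a : ℕ) (ha : a < n) :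
    (m + (a : Fin n) - v).val = ((m - v).val + a) % n := by
  have : m + (a : Fin n) - v = (m - v) + (a : Fin n) := by ring
  rw [this, Fin.val_add, natCast_val a ha]

/-- the relation: `b ≤ a < b + p` cyclically -/
def Dp (p : ℕ) (a b : Fin n) : Prop := (a - b).val < p

instance (p : ℕ) (a b : Fin n) : Decidable (Dp p a b) := by unfold Dp; infer_instance

/-- the interval `{m, m+1, …, m+p-1}` -/
def Jt (p : ℕ) (m : Fin n) : Finset (Fin n) := univ.filter (fun j => Dp p j m)

lemma mem_Jt {p : ℕ} {m j : Fin n} : j ∈ Jt p m ↔ (j - m).val < p := by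
  rw [Jt, mem_filter]; simp [Dp]

lemma self_mem_Jt {p : ℕ} (hp : 0 < p) (m : Fin n) : m ∈ Jt p m := by
  simp [mem_Jt, hp]

lemma eq_add_cast {m j : Fin n} : j = m + ((j - m).val : Fin n) := by
  rw [Fin.cast_val_eq_self]; ring

/-- generic counting lemma: filter of `Jt` pulled back to `range p` -/
lemma card_filter_Jt {p : ℕ} (hpn : p ≤ n) (m : Fin n) (Q : Fin n → Prop) [DecidablePred Q] :
    ((Jt p m).filter Q).card = ((Finset.range p).filter (fun (a : ℕ) => Q (m + (a : Fin n)))).card := by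
  apply Finset.card_bij (fun j _ => (j - m).val)
  · intro j hj
    simp only [mem_filter, mem_Jt] at hj
    simp only [mem_filter, mem_range]
    exact ⟨hj.1, by rw [← eq_add_cast]; exact hj.2⟩
  · intro j1 h1 j2 h2 h
    calc j1 = m + ((j1 - m).val : Fin n) := eq_add_cast
    _ = m + ((j2 - m).val : Fin n) := by rw [h]
    _ = j2 := eq_add_cast.symm
  · intro a ha
    simp only [mem_filter, mem_range] at ha
    refine ⟨m + (a : Fin n), ?_, ?_⟩
    · have hv : (m + (a : Fin n) - m).val = a := by
        have : m + (a : Fin n) - m = (a : Fin n) := by ring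
        rw [this, natCast_val a (lt_of_lt_of_le ha.1 hpn)]
      simp only [mem_filter, mem_Jt, hv]
      exact ⟨ha.1, ha.2⟩
    · have : m + (a : Fin n) - m = (a : Fin n) := by ring
      rw [this, natCast_val a (lt_of_lt_of_le ha.1 hpn)]

lemma card_Jt {p : ℕ} (hpn : p ≤ n) (m : Fin n) : (Jt p m).card = p := by
  have := card_filter_Jt hpn m (fun _ => True)
  simpa using this

lemma card_range_filter_le (p q : ℕ) :
    ((Finset.range p).filter (fun a => q ≤ a)).card = p - q := by
  have : ((Finset.range p).filter (fun a => q ≤ a)) = (Finset.range (p - q)).image (· + q) := by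
    ext j; simp only [mem_filter, mem_range, mem_image]
    constructor
    · intro h; exact ⟨j - q, by omega, by omega⟩
    · rintro ⟨b, hb, rfl⟩; omega
  rw [this, Finset.card_image_of_injective _ (add_left_injective q), Finset.card_range]

/-- The master intersection-cardinality formula. -/
lemma card_Jt_inter {p : ℕ} (hpn : p < n) (u v : Fin n) :
    ((Jt p u) ∩ (Jt p v)).card = (p - (u - v).val) + (p - (n - (u - v).val)) := by
  have h1 : (Jt p u) ∩ (Jt p v) = (Jt p u).filter (fun j => j ∈ Jt p v) := by
    ext j; simp [mem_filter, mem_inter]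
  set t := (u - v).val with ht
  have htn : t < n := (u - v).isLt
  rw [h1, card_filter_Jt (le_of_lt hpn)]
  have h2 : ∀ a ∈ Finset.range p, (u + (a : Fin n) ∈ Jt p v) ↔ (a + t < p ∨ n ≤ a + t) := by
    intro a ha
    rw [mem_range] at ha
    rw [mem_Jt, add_cast_sub u v a (lt_trans ha hpn), ← ht,
      Nat.add_comm t a, mod_cases _ (by omega)]
    split_ifs <;> omega
  have h3 : (Finset.range p).filter (fun (a : ℕ) => u + (a : Fin n) ∈ Jt p v) =
      (Finset.range p).filter (fun (a : ℕ) => a + t < p ∨ n ≤ a + t) := Finset.filter_congr h2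
  rw [h3, Finset.filter_or]
  have hdisj : Disjoint ((Finset.range p).filter (fun (a : ℕ) => a + t < p))
      ((Finset.range p).filter (fun (a : ℕ) => n ≤ a + t)) := by
    rw [Finset.disjoint_filter]
    intro x _ h1 h2
    omega
  rw [Finset.card_union_of_disjoint hdisj]
  congr 1
  · have : (Finset.range p).filter (fun a => a + t < p) = Finset.range (p - t) := by
      ext a; simp only [mem_filter, mem_range]; omega
    rw [this, Finset.card_range]
  · have h4 : (Finset.range p).filter (fun a => n ≤ a + t) =
        (Finset.range p).filter (fun a => n - t ≤ a) := by
      apply Finset.filter_congr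
      intro a _
      constructor <;> (intro; omega)
    rw [h4, card_range_filter_le]

lemma Jt_inj {p : ℕ} (hp : 0 < p) (h2p : 2 * p < n) {u v : Fin n} (h : Jt p u = Jt p v) :
    u = v := by
  have hu : u ∈ Jt p v := h ▸ self_mem_Jt hp u
  have hv : v ∈ Jt p u := h.symm ▸ self_mem_Jt hp v
  rw [mem_Jt] at hu hv
  have h1 : (u - v).val = 0 := by
    by_contra h0
    have e1 : (v - u).val = n - (u - v).val := by
      have h2 : v - u = 0 - (u - v) := by ring
      rw [h2, sub_val, Fin.val_zero, Nat.zero_add, Nat.mod_eq_of_lt (by omega)]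
    omega
  have : u - v = 0 := Fin.val_injective (by simpa using h1)
  exact sub_eq_zero.mp this

end core

section more
variable {n : ℕ} [NeZero n]

lemma val_one' (hn : 1 < n) : ((1 : Fin n)).val = 1 := by
  rw [show (1 : Fin n) = ((1:ℕ) : Fin n) by push_cast; ring, natCast_val 1 hn]

lemma sub_one_val (hn : 1 < n) (x : Fin n) :
    (x - 1).val = if 1 ≤ x.val then x.val - 1 else n - 1 := by
  rw [show x - 1 = x - ((1:ℕ):Fin n) by push_cast; ring, sub_val, natCast_val 1 hn,
    mod_cases _ (by have := x.isLt; omega)]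
  have := x.isLt
  split_ifs <;> omega

lemma neg_one_val (hn : 1 < n) : ((0 : Fin n) - 1).val = n - 1 := by
  rw [sub_one_val hn]; simp

/-- `W k = {i : Dp p k i}` is also an interval. -/
lemma Wt_eq_Jt {p : ℕ} (hp : 0 < p) (hpn : p < n) (k : Fin n) :
    Finset.univ.filter (fun i => Dp p k i) = Jt p (k - (((p-1 : ℕ)) : Fin n)) := by
  ext i
  simp only [mem_filter, mem_univ, true_and, mem_Jt]
  simp only [Dp]
  have he := (k - i).isLt
  set e := (k - i).val with he'
  have h1 : i - (k - (((p-1:ℕ)) : Fin n)) = (((p-1:ℕ)) : Fin n) - (k - i) := by ring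
  have hval : (i - (k - (((p-1:ℕ)) : Fin n))).val = ((p-1) + (n - e)) % n := by
    rw [h1, sub_val, natCast_val (p-1) (by omega)]
  rw [hval, mod_cases _ (by omega)]
  split_ifs <;> omega

lemma mem_Jt_succ {p : ℕ} (hp : 0 < p) (hpn : p < n) (i : Fin n) :
    i + ((p : ℕ) : Fin n) ∈ Jt p (i + 1) := by
  rw [mem_Jt]
  have h1 : i + ((p:ℕ) : Fin n) - (i + 1) = (((p - 1 : ℕ)) : Fin n) := by
    have : ((p:ℕ) : Fin n) = (((p-1:ℕ)) : Fin n) + 1 := by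
      rw [show p = (p-1) + 1 by omega]; push_cast; ring
    rw [this]; ring
  rw [h1, natCast_val (p-1) (by omega)]
  omega

lemma not_mem_Jt_self {p : ℕ} (hpn : p < n) (i : Fin n) :
    i + ((p : ℕ) : Fin n) ∉ Jt p i := by
  rw [mem_Jt]
  have h1 : i + ((p:ℕ) : Fin n) - i = ((p:ℕ) : Fin n) := by ring
  rw [h1, natCast_val p hpn]
  omega

lemma erase_adj {p : ℕ} (hp : 0 < p) (hpn : p + 1 < n) (i : Fin n) :
    (Jt p i).erase i = (Jt p (i + 1)).erase (i + ((p:ℕ) : Fin n)) := by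
  have hn2 : 1 < n := by omega
  ext j
  simp only [mem_erase, mem_Jt]
  have he := (j - i).isLt
  set e := (j - i).val with hedef
  have hji : j = i + ((e : ℕ) : Fin n) := eq_add_cast
  have h3 : (j = i) ↔ e = 0 :=
    ⟨fun h => by rw [hedef, h, sub_self, Fin.val_zero],
     fun h => sub_eq_zero.mp (Fin.val_injective (by rw [← hedef, Fin.val_zero]; exact h))⟩
  have h4 : (j = i + ((p:ℕ) : Fin n)) ↔ e = p := by
    constructor
    · intro h
      rw [hedef, h, show i + ((p:ℕ):Fin n) - i = ((p:ℕ):Fin n) by ring,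
        natCast_val p (by omega)]
    · intro h
      rw [hji, h]
  have h5 : (j - (i + 1)).val = if 1 ≤ e then e - 1 else n - 1 := by
    rw [show j - (i+1) = (j - i) - 1 by ring, sub_one_val hn2, ← hedef]
  rw [ne_eq, ne_eq, h3, h4, h5]
  split_ifs <;> omega

end more

section classify
variable {n : ℕ} [NeZero n]

lemma adj_of_card_inter {p : ℕ} (hp : 2 ≤ p) (h2p : 2 * p < n) {u v : Fin n}
    (h : ((Jt p u) ∩ (Jt p v)).card = p - 1) : u = v + 1 ∨ v = u + 1 := by
  have hn2 : 1 < n := by omega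
  rw [card_Jt_inter (by omega)] at h
  have ht := (u - v).isLt
  set t := (u - v).val with htdef
  have hcase : t = 1 ∨ t = n - 1 := by omega
  rcases hcase with h1 | h1
  · left
    have : u - v = 1 := Fin.val_injective (by rw [← htdef, h1, val_one' hn2])
    rw [← this]; ring
  · right
    have hv : (v - u).val = 1 := by
      have h2 : v - u = 0 - (u - v) := by ring
      rw [h2, sub_val, Fin.val_zero, Nat.zero_add, ← htdef, h1,
        Nat.mod_eq_of_lt (by omega)]
      omega
    have : v - u = 1 := Fin.val_injective (by rw [hv, val_one' hn2])
    rw [← this]; ring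

lemma card_filter_preimage (k : Fin n → Fin n) (S : Finset (Fin n)) :
    (univ.filter (fun j => k j ∈ S)).card
      = ∑ m ∈ S, (univ.filter (fun j => k j = m)).card := by
  have h1 : univ.filter (fun j => k j ∈ S) = S.biUnion (fun m => univ.filter (fun j => k j = m)) := by
    ext j
    simp only [mem_filter, mem_univ, true_and, mem_biUnion]
    exact ⟨fun h => ⟨k j, h, rfl⟩, fun ⟨m, hm, he⟩ => he ▸ hm⟩
  rw [h1, Finset.card_biUnion]
  intro x _ y _ hxy
  rw [Function.onFun, Finset.disjoint_left]
  intro j hj1 hj2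
  simp only [mem_filter] at hj1 hj2
  exact hxy (hj1.2 ▸ hj2.2)

/-- the preimage datum of `τ` at window `j` -/
def Tset (p : ℕ) (τ : Fin n → Fin n) (j : Fin n) : Finset (Fin n) :=
  univ.filter (fun i => Dp p j (τ i))

/-- the "neural" condition on `τ` -/
def Pprop (p : ℕ) (τ : Fin n → Fin n) : Prop :=
  ∀ j, Tset p τ j = ∅ ∨ Tset p τ j = univ ∨
    ∃ k, Tset p τ j = univ.filter (fun i => Dp p k i)

theorem classify {p d : ℕ} (hp : 2 < p) (hpn : p < n - 1) (hgcd : Nat.gcd p n = 1)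
    (hd : 0 < d) (hn : n = p * d + 1) (τ : Fin n → Fin n) (hP : Pprop p τ) :
    (∃ c, τ = fun _ => c) ∨ (∃ t, τ = fun x => x + t) ∨ (∃ t, τ = fun x => t - x) := by
  have hd2 : 2 ≤ d := by
    rcases Nat.lt_or_ge d 2 with h | h
    · interval_cases d <;> omega
    · exact h
  have h2p : 2 * p < n := by
    have : p * 2 ≤ p * d := Nat.mul_le_mul_left p hd2
    omega
  have hn5 : 4 < n := by omega
  by_cases hconst : ∃ c, ∀ x, τ x = c
  · obtain ⟨c, hc⟩ := hconst
    exact Or.inl ⟨c, funext hc⟩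
  right
  push_neg at hconst
  -- Step 1: every `Tset` is a window `W k`
  have hple : p ≤ n := by omega
  have hsum : ∑ j : Fin n, (Tset p τ j).card = n * p := by
    have h1 : ∀ j : Fin n, (Tset p τ j).card = ∑ i : Fin n, if Dp p j (τ i) then 1 else 0 :=
      fun j => Finset.card_filter _ _
    rw [Finset.sum_congr rfl (fun j _ => h1 j), Finset.sum_comm]
    have h2 : ∀ i : Fin n, (∑ j : Fin n, if Dp p j (τ i) then 1 else 0) = p := by
      intro i
      rw [← Finset.card_filter]
      exact card_Jt hple (τ i)
    rw [Finset.sum_congr rfl (fun i _ => h2 i), Finset.sum_const, card_univ,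
      Fintype.card_fin, smul_eq_mul]
  classical
  set U := univ.filter (fun j : Fin n => Tset p τ j = univ) with hUdef
  set s2 := univ.filter (fun j : Fin n => ¬ Tset p τ j = univ) with hs2def
  set E := s2.filter (fun j : Fin n => Tset p τ j = ∅) with hEdef
  set B := s2.filter (fun j : Fin n => ¬ Tset p τ j = ∅) with hBdef
  have hcardsplit : U.card + s2.card = n := by
    rw [hUdef, hs2def, Finset.card_filter_add_card_filter_not, card_univ,
      Fintype.card_fin]
  have hcard2 : E.card + B.card = s2.card := by
    rw [hEdef, hBdef, Finset.card_filter_add_card_filter_not]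
  have hsplit1 : ∑ j : Fin n, (Tset p τ j).card
      = ∑ j ∈ U, (Tset p τ j).card + ∑ j ∈ s2, (Tset p τ j).card :=
    (Finset.sum_filter_add_sum_filter_not univ _ _).symm
  have hsplit2 : ∑ j ∈ s2, (Tset p τ j).card
      = ∑ j ∈ E, (Tset p τ j).card + ∑ j ∈ B, (Tset p τ j).card :=
    (Finset.sum_filter_add_sum_filter_not s2 _ _).symm
  have hsU : ∑ j ∈ U, (Tset p τ j).card = U.card * n := by
    have h1 : ∑ j ∈ U, (Tset p τ j).card = ∑ _j ∈ U, n := by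
      apply Finset.sum_congr rfl
      intro j hj
      rw [hUdef] at hj
      simp only [mem_filter] at hj
      rw [hj.2, card_univ, Fintype.card_fin]
    rw [h1, Finset.sum_const, smul_eq_mul]
  have hsE : ∑ j ∈ E, (Tset p τ j).card = 0 := by
    apply Finset.sum_eq_zero
    intro j hj
    rw [hEdef] at hj
    simp only [mem_filter] at hj
    rw [hj.2, Finset.card_empty]
  have hsB : ∑ j ∈ B, (Tset p τ j).card = B.card * p := by
    have h1 : ∑ j ∈ B, (Tset p τ j).card = ∑ _j ∈ B, p := by
      apply Finset.sum_congr rfl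
      intro j hj
      rw [hBdef, hs2def] at hj
      simp only [mem_filter] at hj
      rcases hP j with h | h | ⟨kk, h⟩
      · exact absurd h hj.2
      · exact absurd h hj.1.2
      · rw [h, Wt_eq_Jt (by omega) (by omega) kk, card_Jt hple]
    rw [h1, Finset.sum_const, smul_eq_mul]
  have htotal : n * p = U.card * n + B.card * p := by
    rw [← hsum, hsplit1, hsplit2, hsU, hsE, hsB]
    omega
  -- divisibility
  have hkey : U.card * (n - p) = E.card * p := by
    have habc : U.card + E.card + B.card = n := by omega
    have hZ : (U.card : ℤ) * ((n : ℤ) - p) = (E.card : ℤ) * p := by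
      have h1 : (n : ℤ) * p = U.card * n + B.card * p := by exact_mod_cast htotal
      have h2 : (U.card : ℤ) + E.card + B.card = n := by exact_mod_cast habc
      linear_combination -h1 - (p : ℤ) * h2
    have : ((U.card * (n - p) : ℕ) : ℤ) = ((E.card * p : ℕ) : ℤ) := by
      push_cast [Nat.cast_sub hple]
      linear_combination hZ
    exact_mod_cast this
  have hcop : Nat.Coprime p (n - p) := by
    have hd1 : d - 1 + 1 = d := by omega
    have h1 : n - p = 1 + (d - 1) * p := by
      calc n - p = p * d + 1 - p := by rw [hn]
      _ = p * (d - 1) + 1 := by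
          obtain ⟨m, hm⟩ : ∃ m, d = m + 1 := ⟨d - 1, by omega⟩
          subst hm
          simp only [Nat.mul_succ, Nat.add_sub_cancel]
          omega
      _ = 1 + (d - 1) * p := by ring
    rw [h1]
    exact (Nat.coprime_add_mul_right_right p 1 (d-1)).mpr (Nat.coprime_one_right p)
  have hdvd : p ∣ U.card := by
    apply Nat.Coprime.dvd_of_dvd_mul_right hcop
    rw [hkey]
    exact ⟨E.card, Nat.mul_comm _ _⟩
  have hc0 : U.card = 0 := by
    by_contra hc
    have hpc : p ≤ U.card := Nat.le_of_dvd (Nat.pos_of_ne_zero hc) hdvd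
    obtain ⟨x, hx⟩ := hconst (τ 0)
    have hUsub : U ⊆ Jt p (τ 0) ∩ Jt p (τ x) := by
      intro j hj
      rw [hUdef] at hj
      simp only [mem_filter] at hj
      have hall : ∀ i, Dp p j (τ i) := by
        intro i
        have h2 : i ∈ Tset p τ j := by rw [hj.2]; exact mem_univ i
        simpa [Tset] using h2
      rw [mem_inter, mem_Jt, mem_Jt]
      exact ⟨hall 0, hall x⟩
    have hcle := Finset.card_le_card hUsub
    rw [card_Jt_inter (by omega)] at hcle
    have ht := (τ 0 - τ x).isLt
    have htne : (τ 0 - τ x).val ≠ 0 := by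
      intro h0
      exact hx (sub_eq_zero.mp (Fin.val_injective (by rw [h0, Fin.val_zero]))).symm
    omega
  have ha0 : E.card = 0 := by
    rw [hc0, Nat.zero_mul] at hkey
    have := hkey.symm
    rcases Nat.mul_eq_zero.mp this with h | h
    · exact h
    · omega
  have step1 : ∀ j, ∃ kk, Tset p τ j = univ.filter (fun i => Dp p kk i) := by
    intro j
    rcases hP j with h | h | h
    · exfalso
      have hjE : j ∈ E := by
        have hne : ¬ Tset p τ j = univ := by
          rw [h]
          intro hcontra
          have h5 : (univ : Finset (Fin n)).Nonempty := ⟨j, mem_univ j⟩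
          rw [← hcontra] at h5
          exact Finset.not_nonempty_empty h5
        rw [hEdef, hs2def]
        simp only [mem_filter, mem_univ, true_and]
        exact ⟨hne, h⟩
      rw [Finset.card_eq_zero] at ha0
      rw [ha0] at hjE
      exact absurd hjE (Finset.notMem_empty j)
    · exfalso
      have hjU : j ∈ U := by
        rw [hUdef]
        simp only [mem_filter, mem_univ, true_and]
        exact h
      rw [Finset.card_eq_zero] at hc0
      rw [hc0] at hjU
      exact absurd hjU (Finset.notMem_empty j)
    · exact h
  choose k hk using step1
  -- Step 2: the fundamental identity
  have step2 : ∀ i, univ.filter (fun j => k j ∈ Jt p i) = Jt p (τ i) := by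
    intro i
    ext j
    simp only [mem_filter, mem_univ, true_and, mem_Jt]
    have := hk j
    have hiT : i ∈ Tset p τ j ↔ Dp p (k j) i := by
      rw [this]; simp [mem_filter]
    simp only [Tset, mem_filter, mem_univ, true_and] at hiT
    exact hiT.symm
  have hmem : ∀ (i j : Fin n), j ∈ Jt p (τ i) ↔ k j ∈ Jt p i := by
    intro i j
    rw [← step2 i]
    simp
  -- Step 3: k is equidistributed, hence bijective
  set μ : Fin n → ℕ := fun m => (univ.filter (fun j => k j = m)).card with hμdef
  have hmu : ∀ i, ∑ m ∈ Jt p i, μ m = p := by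
    intro i
    rw [← card_filter_preimage, step2, card_Jt (by omega)]
  have hstep : ∀ i : Fin n, μ i = μ (i + ((p : ℕ) : Fin n)) := by
    intro i
    have h1 := hmu i
    have h2 := hmu (i + 1)
    have e1 : ∑ m ∈ Jt p i, μ m = μ i + ∑ m ∈ (Jt p i).erase i, μ m :=
      (Finset.add_sum_erase _ _ (self_mem_Jt (by omega) i)).symm
    have e2 : ∑ m ∈ Jt p (i+1), μ m
        = μ (i + ((p : ℕ) : Fin n)) + ∑ m ∈ (Jt p (i+1)).erase (i + ((p : ℕ) : Fin n)), μ m :=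
      (Finset.add_sum_erase _ _ (mem_Jt_succ (by omega) (by omega) i)).symm
    rw [← erase_adj (by omega) (by omega) i] at e2
    omega
  obtain ⟨q, -, hq⟩ := Nat.exists_mul_mod_eq_one_of_coprime hgcd (by omega)
  have hiter : ∀ m : ℕ, μ (((m * p : ℕ)) : Fin n) = μ 0 := by
    intro m
    induction m with
    | zero => norm_num
    | succ m ih =>
      have hc : ((((m+1) * p : ℕ)) : Fin n) = (((m*p : ℕ)) : Fin n) + ((p : ℕ) : Fin n) := by
        push_cast; ring
      rw [hc, ← hstep]
      exact ih
  have hcst : ∀ x : Fin n, μ x = μ 0 := by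
    intro x
    have hxx : (((x.val * q * p : ℕ)) : Fin n) = x := by
      apply Fin.val_injective
      have hlt : x.val % n = x.val := Nat.mod_eq_of_lt x.isLt
      rw [Fin.val_natCast, mul_assoc, Nat.mul_mod, mul_comm q p, hq, mul_one, hlt, hlt]
    rw [← hxx, hiter (x.val * q)]
  have hμ0 : μ 0 = 1 := by
    have h1 : (univ.filter (fun j => k j ∈ (univ : Finset (Fin n)))).card = n := by
      have : univ.filter (fun j : Fin n => k j ∈ (univ : Finset (Fin n))) = univ := by
        apply Finset.filter_true_of_mem
        intro j _
        exact mem_univ _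
      rw [this, card_univ, Fintype.card_fin]
    rw [card_filter_preimage] at h1
    have h2 : ∑ m : Fin n, μ m = n * μ 0 := by
      rw [Finset.sum_congr rfl (fun m _ => hcst m), Finset.sum_const, card_univ,
        Fintype.card_fin, smul_eq_mul]
    rw [h2] at h1
    exact Nat.eq_of_mul_eq_mul_left (Nat.pos_of_ne_zero (NeZero.ne n))
      (by rw [mul_one]; exact h1)
  have hkinj : Function.Injective k := by
    intro j1 j2 h
    have hcard : (univ.filter (fun j => k j = k j2)).card = 1 := by
      have := hcst (k j2)
      rw [hμ0] at this
      exact this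
    have h1 : j1 ∈ univ.filter (fun j => k j = k j2) := by simp [h]
    have h2 : j2 ∈ univ.filter (fun j => k j = k j2) := by simp
    exact Finset.card_le_one.mp (le_of_eq hcard) j1 h1 j2 h2
  have hksurj : Function.Surjective k := Finite.surjective_of_injective hkinj
  -- Step 4: τ is injective
  have hτinj : Function.Injective τ := by
    intro i1 i2 h
    have hJ : Jt p i1 = Jt p i2 := by
      ext m
      obtain ⟨j, rfl⟩ := hksurj m
      rw [← hmem i1 j, ← hmem i2 j, h]
    exact Jt_inj (by omega) h2p hJ
  -- Step 5: adjacent codewords map to adjacent codewords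
  have hadj : ∀ i : Fin n, τ (i+1) = τ i + 1 ∨ τ i = τ (i+1) + 1 := by
    intro i
    apply adj_of_card_inter (by omega) h2p
    have hset : Jt p (τ (i+1)) ∩ Jt p (τ i)
        = univ.filter (fun j => k j ∈ Jt p (i+1) ∩ Jt p i) := by
      ext j
      simp only [mem_inter, mem_filter, mem_univ, true_and]
      rw [← hmem (i+1) j, ← hmem i j]
    rw [hset, card_filter_preimage]
    have hone : ∀ m ∈ Jt p (i+1) ∩ Jt p i, μ m = 1 := by
      intro m _
      rw [hcst m, hμ0]
    rw [Finset.sum_congr rfl hone, Finset.sum_const, smul_eq_mul, mul_one,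
      card_Jt_inter (by omega)]
    have hv : ((i+1) - i).val = 1 := by
      rw [show i + 1 - i = 1 by ring, val_one' (by omega)]
    rw [hv]
    omega
  -- Step 6: no sign flips
  have hnoflip : ∀ i : Fin n, τ (i + 1 + 1) ≠ τ i := by
    intro i h
    have h2 := hτinj h
    have h3 : i + (1 + 1) = i + 0 := by rw [add_zero, ← add_assoc, h2]
    have h4 : ((1:Fin n) + 1) = 0 := add_left_cancel h3
    have h5 : ((1:Fin n) + 1).val = 0 := by rw [h4, Fin.val_zero]
    rw [Fin.val_add, val_one' (by omega), Nat.mod_eq_of_lt (by omega)] at h5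
    omega
  have hposstep : ∀ i : Fin n, τ (i+1) = τ i + 1 → τ (i+1+1) = τ (i+1) + 1 := by
    intro i h
    rcases hadj (i+1) with h2 | h2
    · exact h2
    · exfalso
      apply hnoflip i
      rw [h] at h2
      exact (add_right_cancel h2.symm : τ (i+1+1) = τ i)
  have hnegstep : ∀ i : Fin n, τ (i+1) = τ i - 1 → τ (i+1+1) = τ (i+1) - 1 := by
    intro i h
    rcases hadj (i+1) with h2 | h2
    · exfalso
      apply hnoflip i
      rw [h2, h]
      ring
    · rw [h2]
      exact (add_sub_cancel_right (τ (i+1+1)) 1).symm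
  rcases hadj 0 with h0 | h0
  · left
    have hind : ∀ m : ℕ, τ (((m:ℕ)) : Fin n) = τ 0 + (((m:ℕ)) : Fin n)
        ∧ τ ((((m:ℕ)):Fin n) + 1) = τ (((m:ℕ)):Fin n) + 1 := by
      intro m
      induction m with
      | zero =>
        refine ⟨by norm_num, ?_⟩
        have hz : ((0:ℕ) : Fin n) = 0 := by norm_num
        rw [hz]
        exact h0
      | succ m ih =>
        have hc : ((((m+1:ℕ))) : Fin n) = (((m:ℕ)):Fin n) + 1 := by push_cast; ring
        constructor
        · rw [hc, ih.2, ih.1]; push_cast; ring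
        · rw [hc]
          exact hposstep _ ih.2
    refine ⟨τ 0, funext fun x => ?_⟩
    have hx := (hind x.val).1
    rw [Fin.cast_val_eq_self] at hx
    rw [hx]; ring
  · right
    have h0' : τ (0 + 1) = τ 0 - 1 := by rw [h0]; ring
    have hind : ∀ m : ℕ, τ (((m:ℕ)) : Fin n) = τ 0 - (((m:ℕ)) : Fin n)
        ∧ τ ((((m:ℕ)):Fin n) + 1) = τ (((m:ℕ)):Fin n) - 1 := by
      intro m
      induction m with
      | zero =>
        refine ⟨by norm_num, ?_⟩
        have hz : ((0:ℕ) : Fin n) = 0 := by norm_num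
        rw [hz]
        exact h0'
      | succ m ih =>
        have hc : ((((m+1:ℕ))) : Fin n) = (((m:ℕ)):Fin n) + 1 := by push_cast; ring
        constructor
        · rw [hc, ih.2, ih.1]; push_cast; ring
        · rw [hc]
          exact hnegstep _ ih.2
    refine ⟨τ 0, funext fun x => ?_⟩
    have hx := (hind x.val).1
    rw [Fin.cast_val_eq_self] at hx
    exact hx

end classify

section families
variable {n : ℕ} [NeZero n]

lemma Pprop_const (p : ℕ) (c : Fin n) : Pprop p (fun _ => c) := by
  intro j
  by_cases h : Dp p j c
  · right; left
    rw [Tset, Finset.filter_true_of_mem (fun i _ => h)]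
  · left
    rw [Tset, Finset.filter_false_of_mem (fun i _ => h)]

lemma Pprop_add (p : ℕ) (t : Fin n) : Pprop p (fun x => x + t) := by
  intro j
  right; right
  refine ⟨j - t, ?_⟩
  apply Finset.filter_congr
  intro i _
  have h : j - (i + t) = (j - t) - i := by ring
  simp only [Dp, h]

lemma Pprop_sub {p : ℕ} (hp : 0 < p) (hpn : p < n) (t : Fin n) :
    Pprop p (fun x => t - x) := by
  intro j
  right; right
  refine ⟨t - j + (((p-1:ℕ)) : Fin n), ?_⟩
  have h1 : Finset.univ.filter (fun i => Dp p (t - j + (((p-1:ℕ)) : Fin n)) i)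
      = Jt p (t - j) := by
    rw [Wt_eq_Jt hp hpn]
    congr 1
    ring
  rw [h1]
  ext i
  simp only [Tset, mem_filter, mem_univ, true_and, mem_Jt]
  simp only [Dp]
  have h2 : j - (t - i) = i - (t - j) := by ring
  rw [h2]

/-- the three families as a set of maps -/
def famSet (n : ℕ) [NeZero n] : Set (Fin n → Fin n) :=
  {f | (∃ c, f = fun _ => c) ∨ (∃ t, f = fun x => x + t) ∨ (∃ t, f = fun x => t - x)}

lemma ncard_famSet (hn : 4 < n) : (famSet n).ncard = 3 * n := by
  have h1 : famSet n = Set.range (fun c : Fin n => (fun _ => c : Fin n → Fin n))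
      ∪ (Set.range (fun t : Fin n => (fun x => x + t : Fin n → Fin n))
      ∪ Set.range (fun t : Fin n => (fun x => t - x : Fin n → Fin n))) := by
    ext f
    simp only [famSet, Set.mem_setOf_eq, Set.mem_union, Set.mem_range]
    constructor
    · rintro (⟨c, h⟩ | ⟨t, h⟩ | ⟨t, h⟩)
      · exact Or.inl ⟨c, h.symm⟩
      · exact Or.inr (Or.inl ⟨t, h.symm⟩)
      · exact Or.inr (Or.inr ⟨t, h.symm⟩)
    · rintro (⟨c, h⟩ | ⟨t, h⟩ | ⟨t, h⟩)
      · exact Or.inl ⟨c, h.symm⟩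
      · exact Or.inr (Or.inl ⟨t, h.symm⟩)
      · exact Or.inr (Or.inr ⟨t, h.symm⟩)
  have hone : (1 : Fin n) ≠ 0 := by
    intro h
    have := congrArg Fin.val h
    rw [val_one' (by omega), Fin.val_zero] at this
    omega
  have htwo : (1 : Fin n) + 1 ≠ 0 := by
    intro h
    have := congrArg Fin.val h
    rw [Fin.val_add, val_one' (by omega), Nat.mod_eq_of_lt (by omega), Fin.val_zero] at this
    omega
  have hinj1 : Function.Injective (fun c : Fin n => (fun _ => c : Fin n → Fin n)) :=
    fun a b h => congrFun h 0
  have hinj2 : Function.Injective (fun t : Fin n => (fun x => x + t : Fin n → Fin n)) := by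
    intro a b h
    have := congrFun h 0
    simpa using this
  have hinj3 : Function.Injective (fun t : Fin n => (fun x => t - x : Fin n → Fin n)) := by
    intro a b h
    have := congrFun h 0
    simpa using this
  have hcr : ∀ g : Fin n → (Fin n → Fin n), Function.Injective g →
      (Set.range g).ncard = n := by
    intro g hg
    rw [← Set.image_univ, Set.ncard_image_of_injective _ hg, Set.ncard_univ, Nat.card_eq_fintype_card, Fintype.card_fin]
  have hd12 : Disjoint (Set.range (fun c : Fin n => (fun _ => c : Fin n → Fin n)))
      (Set.range (fun t : Fin n => (fun x => x + t : Fin n → Fin n))) := by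
    rw [Set.disjoint_left]
    rintro f ⟨c, rfl⟩ ⟨t, hf⟩
    have h0 := congrFun hf 0
    have h1 := congrFun hf 1
    simp only at h0 h1
    exact hone (by linear_combination h1 - h0)
  have hd13 : Disjoint (Set.range (fun c : Fin n => (fun _ => c : Fin n → Fin n)))
      (Set.range (fun t : Fin n => (fun x => t - x : Fin n → Fin n))) := by
    rw [Set.disjoint_left]
    rintro f ⟨c, rfl⟩ ⟨t, hf⟩
    have h0 := congrFun hf 0
    have h1 := congrFun hf 1
    simp only at h0 h1
    exact hone (by linear_combination h0 - h1)
  have hd23 : Disjoint (Set.range (fun t : Fin n => (fun x => x + t : Fin n → Fin n)))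
      (Set.range (fun t : Fin n => (fun x => t - x : Fin n → Fin n))) := by
    rw [Set.disjoint_left]
    rintro f ⟨t, rfl⟩ ⟨s, hf⟩
    have h0 := congrFun hf 0
    have h1 := congrFun hf 1
    simp only at h0 h1
    exact htwo (by linear_combination h0 - h1)
  rw [h1, Set.ncard_union_eq (by
      rw [Set.disjoint_union_right]; exact ⟨hd12, hd13⟩) (Set.toFinite _) (Set.toFinite _),
    Set.ncard_union_eq hd23 (Set.toFinite _) (Set.toFinite _), hcr _ hinj1, hcr _ hinj2,
    hcr _ hinj3]
  ring

end families

section ringside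

variable {X : Type*} [Fintype X] [DecidableEq X]

/-- indicator function -/
def deltaF (x : X) : X → ZMod 2 := fun y => if y = x then 1 else 0

lemma sum_deltaF : (∑ x : X, deltaF x) = (1 : X → ZMod 2) := by
  funext y
  rw [Finset.sum_apply]
  simp only [deltaF]
  rw [Finset.sum_ite_eq Finset.univ y (fun _ => (1 : ZMod 2))]
  simp

lemma evalpoint (ψ : (X → ZMod 2) →+* ZMod 2) : ∃ x, ∀ f, ψ f = f x := by
  have h1 : ∑ x : X, ψ (deltaF x) = 1 := by rw [← map_sum, sum_deltaF, map_one]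
  have h2 : ∃ x, ψ (deltaF x) = 1 := by
    by_contra h
    push_neg at h
    have h0 : ∀ x, ψ (deltaF x) = 0 := by
      intro x
      have hx := h x
      revert hx
      generalize ψ (deltaF x) = a
      revert a
      decide
    rw [Finset.sum_congr rfl (fun x _ => h0 x), Finset.sum_const, smul_zero] at h1
    exact zero_ne_one h1
  obtain ⟨x, hx⟩ := h2
  refine ⟨x, fun f => ?_⟩
  have key : f = (fun _ => f x) * deltaF x + f * (1 - deltaF x) := by
    funext y
    simp only [Pi.add_apply, Pi.mul_apply, Pi.sub_apply, Pi.one_apply, deltaF]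
    split_ifs with h
    · subst h; ring
    · ring
  have hconst : ψ (fun _ => f x) = f x := by
    have h01 : f x = 0 ∨ f x = 1 := by
      generalize f x = a
      revert a
      decide
    rcases h01 with h | h
    · rw [h]; exact map_zero ψ
    · rw [h]; exact map_one ψ
  calc ψ f = ψ ((fun _ => f x) * deltaF x + f * (1 - deltaF x)) := by rw [← key]
  _ = ψ (fun _ => f x) * ψ (deltaF x) + ψ f * (1 - ψ (deltaF x)) := by
      rw [map_add, map_mul, map_mul, map_sub, map_one]
  _ = f x := by rw [hx, hconst]; ring

lemma endo_is_pullback (φ : (X → ZMod 2) →+* (X → ZMod 2)) :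
    ∃ s : X → X, ∀ f x, φ f x = f (s x) := by
  have h : ∀ x, ∃ y, ∀ f, φ f x = f y := by
    intro x
    exact evalpoint ((Pi.evalRingHom (fun _ => ZMod 2) x).comp φ)
  choose s hs using h
  exact ⟨s, fun f x => hs x f⟩

end ringside

section code
variable (n p : ℕ) [NeZero n]

def cw (i : Fin n) : Fin n → Bool := fun j => decide ((j - i).val < p)

lemma cw_mem (i : Fin n) : cw n p i ∈ circCode n p := ⟨i, fun _ => rfl⟩

def eC (i : Fin n) : ↥(circCode n p) := ⟨cw n p i, cw_mem n p i⟩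

lemma eC_bijective (hp0 : 0 < p) (h2p : 2 * p < n) : Function.Bijective (eC n p) := by
  constructor
  · intro i1 i2 h
    have hJ : Jt p i1 = Jt p i2 := by
      ext j
      rw [mem_Jt, mem_Jt]
      have := congrFun (congrArg Subtype.val h) j
      simp only [eC, cw, decide_eq_decide] at this
      rw [this]
    exact Jt_inj hp0 h2p hJ
  · rintro ⟨c, hc⟩
    obtain ⟨i, hi⟩ := hc
    exact ⟨i, Subtype.ext (funext fun j => (hi j).symm)⟩

lemma xvar_eC (j i : Fin n) :
    xvar (circCode n p) j (eC n p i) = if Dp p j i then 1 else 0 := by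
  simp only [xvar, eC, cw]
  by_cases h : (j - i).val < p
  · rw [if_pos (show Dp p j i from h)]; simp [h]
  · rw [if_neg (show ¬ Dp p j i from h)]; simp [h]

end code

section main
variable (n p : ℕ) [NeZero n]

noncomputable instance : Fintype ↥(circCode n p) := (Set.toFinite _).fintype

noncomputable def ecEquiv (hp0 : 0 < p) (h2p : 2 * p < n) : Fin n ≃ ↥(circCode n p) :=
  Equiv.ofBijective _ (eC_bijective n p hp0 h2p)

noncomputable def Phi (hp0 : 0 < p) (h2p : 2 * p < n) (τ : Fin n → Fin n) :
    (↥(circCode n p) → ZMod 2) →+* (↥(circCode n p) → ZMod 2) :=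
  Pi.ringHom (fun c => Pi.evalRingHom (fun _ => ZMod 2)
    (eC n p (τ ((ecEquiv n p hp0 h2p).symm c))))

lemma Phi_apply (hp0 : 0 < p) (h2p : 2 * p < n) (τ : Fin n → Fin n)
    (f : ↥(circCode n p) → ZMod 2) (c : ↥(circCode n p)) :
    Phi n p hp0 h2p τ f c = f (eC n p (τ ((ecEquiv n p hp0 h2p).symm c))) := rfl

end main

theorem count_neuralEndo' (n p d : ℕ) (hp : 2 < p) (hpn : p < n - 1)
    (hgcd : Nat.gcd p n = 1) (hd : 0 < d) (hn : n = p * d + 1) :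
    {φ : (↥(circCode n p) → ZMod 2) →+* (↥(circCode n p) → ZMod 2) |
      IsNeuralEndo (circCode n p) φ}.ncard = 3 * n := by
  have hd2 : 2 ≤ d := by
    rcases Nat.lt_or_ge d 2 with h | h
    · interval_cases d <;> omega
    · exact h
  have h2p : 2 * p < n := by
    have : p * 2 ≤ p * d := Nat.mul_le_mul_left p hd2
    omega
  haveI : NeZero n := ⟨by omega⟩
  have hp0 : 0 < p := by omega
  set ec := ecEquiv n p hp0 h2p with hec
  have hsymm : ∀ i, ec.symm (eC n p i) = i := fun i => ec.symm_apply_apply i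
  have happ : ∀ c, eC n p (ec.symm c) = c := fun c => ec.apply_symm_apply c
  have hval : ∀ (τ : Fin n → Fin n) (j i : Fin n),
      Phi n p hp0 h2p τ (xvar (circCode n p) j) (eC n p i)
        = if Dp p j (τ i) then 1 else 0 := by
    intro τ j i
    rw [Phi_apply, ← hec, hsymm i, xvar_eC]
  have hiff : ∀ τ, IsNeuralEndo (circCode n p) (Phi n p hp0 h2p τ) ↔ Pprop p τ := by
    intro τ
    constructor
    · intro h j
      rcases h j with h0 | h1 | ⟨i0, hi0⟩
      · left
        rw [Tset, Finset.filter_eq_empty_iff] at *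
        intro i _ hD
        have h2 := congrFun h0 (eC n p i)
        rw [hval, if_pos hD, Pi.zero_apply] at h2
        exact one_ne_zero h2
      · right; left
        apply Finset.eq_univ_iff_forall.mpr
        intro i
        simp only [Tset, mem_filter, mem_univ, true_and]
        by_contra hD
        have h2 := congrFun h1 (eC n p i)
        rw [hval, if_neg hD, Pi.one_apply] at h2
        exact zero_ne_one h2
      · right; right
        refine ⟨i0, ?_⟩
        ext i
        simp only [Tset, mem_filter, mem_univ, true_and]
        have h2 := congrFun hi0 (eC n p i)
        rw [hval, xvar_eC] at h2
        constructor
        · intro hD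
          by_contra hD2
          rw [if_pos hD, if_neg hD2] at h2
          exact one_ne_zero h2
        · intro hD
          by_contra hD2
          rw [if_neg hD2, if_pos hD] at h2
          exact zero_ne_one h2
    · intro h j
      rcases h j with h0 | h1 | ⟨k0, hk0⟩
      · left
        funext c
        obtain ⟨i, rfl⟩ : ∃ i, c = eC n p i := ⟨ec.symm c, (happ c).symm⟩
        rw [hval, Pi.zero_apply, if_neg]
        rw [Tset, Finset.filter_eq_empty_iff] at h0
        exact h0 (mem_univ i)
      · right; left
        funext c
        obtain ⟨i, rfl⟩ : ∃ i, c = eC n p i := ⟨ec.symm c, (happ c).symm⟩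
        rw [hval, Pi.one_apply, if_pos]
        have : i ∈ Tset p τ j := by rw [h1]; exact mem_univ i
        simpa [Tset] using this
      · right; right
        refine ⟨k0, ?_⟩
        funext c
        obtain ⟨i, rfl⟩ : ∃ i, c = eC n p i := ⟨ec.symm c, (happ c).symm⟩
        rw [hval, xvar_eC]
        have hiffm : Dp p j (τ i) ↔ Dp p k0 i := by
          constructor
          · intro hD
            have : i ∈ Tset p τ j := by simp [Tset, hD]
            rw [hk0] at this
            simpa using this
          · intro hD
            have : i ∈ univ.filter (fun i => Dp p k0 i) := by simp [hD]
            rw [← hk0] at this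
            simpa [Tset] using this
        by_cases hD : Dp p j (τ i)
        · rw [if_pos hD, if_pos (hiffm.mp hD)]
        · rw [if_neg hD, if_neg (fun hc => hD (hiffm.mpr hc))]
  have hPhiInj : Function.Injective (Phi n p hp0 h2p) := by
    intro τ1 τ2 h
    funext i
    have h1 := congrFun (congrArg (fun ψ => ψ (deltaF (eC n p (τ1 i)))) h) (eC n p i)
    rw [Phi_apply, Phi_apply, ← hec, hsymm i] at h1
    simp only [deltaF, if_pos rfl] at h1
    by_cases he : eC n p (τ2 i) = eC n p (τ1 i)
    · exact ((eC_bijective n p hp0 h2p).1 he).symm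
    · rw [if_neg he] at h1
      exact absurd h1 one_ne_zero
  have hset : {φ : (↥(circCode n p) → ZMod 2) →+* (↥(circCode n p) → ZMod 2) |
      IsNeuralEndo (circCode n p) φ} = Phi n p hp0 h2p '' famSet n := by
    ext φ
    simp only [Set.mem_setOf_eq, Set.mem_image]
    constructor
    · intro hφ
      obtain ⟨s, hs⟩ := endo_is_pullback φ
      have hrep : Phi n p hp0 h2p (fun i => ec.symm (s (eC n p i))) = φ := by
        apply RingHom.ext
        intro f
        funext c
        rw [Phi_apply, ← hec]
        rw [happ, happ]
        exact (hs f c).symm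
      refine ⟨fun i => ec.symm (s (eC n p i)), ?_, hrep⟩
      have hPp : Pprop p (fun i => ec.symm (s (eC n p i))) := by
        apply (hiff _).mp
        rw [hrep]
        exact hφ
      exact classify hp hpn hgcd hd hn _ hPp
    · rintro ⟨τ, hτ, rfl⟩
      apply (hiff τ).mpr
      rcases hτ with ⟨c, rfl⟩ | ⟨t, rfl⟩ | ⟨t, rfl⟩
      · exact Pprop_const p c
      · exact Pprop_add p t
      · exact Pprop_sub hp0 (by omega) t
  rw [hset, Set.ncard_image_of_injective _ hPhiInj, ncard_famSet (by omega)]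

/-- For the circulant code with support `p` on `n` neurons, where `2 < p < n - 1`,
`gcd(p, n) = 1` and `n = pd + 1`, the number of neural ring endomorphisms is `3n`. -/
theorem count_neuralEndo_coprime_r_one (n p d : ℕ) (hp : 2 < p) (hpn : p < n - 1)
    (hgcd : Nat.gcd p n = 1) (hd : 0 < d) (hn : n = p * d + 1) :
    {φ : (↥(circCode n p) → ZMod 2) →+* (↥(circCode n p) → ZMod 2) |
      IsNeuralEndo (circCode n p) φ}.ncard = 3 * n := by
  exact count_neuralEndo' n p d hp hpn hgcd hd hn
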